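/- If G is a connected graph with at least two vertices, then γ_t(G*) ≤ γ_t(G), where G* is the double graph of G. -/

import Mathlib

open SimpleGraph

/-- The total domination number of a graph. -/
noncomputable def totalDominationNumber {V : Type*} (G : SimpleGraph V) : ℕ :=
  sInf {k | ∃ D : Finset V, (∀ v : V, ∃ u ∈ D, G.Adj v u) ∧ D.card = k}

/-- The annihilation number of a graph. -/
noncomputable def annihilationNumber {V : Type*} (G : SimpleGraph V) : ℕ :=
  sSup {k | ∃ S : Finset V, S.card = k ∧ ∑ v ∈ S, (G.neighborSet v).ncard ≤ G.edgeSet.ncard}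

/-- The double graph `G*` of `G`: two disjoint copies `G₁, G₂` of `G` (the copy of `u`
in `Gᵢ` being `(u, i)`), where for each edge `uv` of `G` the edges `u₁v₂` and `u₂v₁`
are added; equivalently, `(u, i)` and `(v, j)` are adjacent iff `uv ∈ E(G)`. -/
def doubleGraph {V : Type*} (G : SimpleGraph V) : SimpleGraph (V × Fin 2) where
  Adj a b := G.Adj a.1 b.1
  symm := ⟨fun _ _ h => G.adj_symm h⟩
  loopless := ⟨fun a h => G.irrefl h⟩

/-!
A total dominating set `D` of `G` stays one in `G*` when placed in a single copy of `G`,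
since `(v, j)` is adjacent to `(u, i)` whenever `v` is adjacent to `u`. Conversely the
projection of a total dominating set of `G*` totally dominates `G`, so if `G` has none then
neither has `G*`, and both total domination numbers are `sInf ∅ = 0`.
-/

def IsTotalDominatingSet {V : Type*} (G : SimpleGraph V) (D : Finset V) : Prop :=
  ∀ v : V, ∃ u ∈ D, G.Adj v u

section TotalDomination

variable {V : Type*} {G : SimpleGraph V}

theorem totalDominationNumber_le_card {D : Finset V} (hD : IsTotalDominatingSet G D) :
    totalDominationNumber G ≤ D.card :=
  Nat.sInf_le ⟨D, hD, rfl⟩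

theorem exists_isTotalDominatingSet_card_eq (h : ∃ D, IsTotalDominatingSet G D) :
    ∃ D, IsTotalDominatingSet G D ∧ D.card = totalDominationNumber G := by
  obtain ⟨D, hD⟩ := h
  exact Nat.sInf_mem (s := {k | ∃ D : Finset V, IsTotalDominatingSet G D ∧ D.card = k})
    ⟨D.card, D, hD, rfl⟩

theorem totalDominationNumber_eq_zero (h : ∀ D, ¬IsTotalDominatingSet G D) :
    totalDominationNumber G = 0 := by
  have hempty : {k | ∃ D : Finset V, IsTotalDominatingSet G D ∧ D.card = k} = ∅ :=
    Set.eq_empty_of_forall_notMem fun _ ⟨D, hD, _⟩ => h D hD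
  exact Nat.sInf_eq_zero.mpr (Or.inr hempty)

theorem IsTotalDominatingSet.image_doubleGraph [DecidableEq V] {D : Finset V}
    (hD : IsTotalDominatingSet G D) (i : Fin 2) : IsTotalDominatingSet (doubleGraph G) (D.image (·, i)) := fun v => by
  obtain ⟨u, hu, hvu⟩ := hD v.1
  exact ⟨(u, i), Finset.mem_image_of_mem _ hu, hvu⟩

theorem IsTotalDominatingSet.of_doubleGraph [DecidableEq V] {D : Finset (V × Fin 2)}
    (hD : IsTotalDominatingSet (doubleGraph G) D) : IsTotalDominatingSet G (D.image Prod.fst) :=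
  fun v => by
    obtain ⟨u, hu, hvu⟩ := hD (v, 0)
    exact ⟨u.1, Finset.mem_image_of_mem _ hu, hvu⟩

end TotalDomination

theorem stmt_14_general {V : Type*} (G : SimpleGraph V) :
    totalDominationNumber (doubleGraph G) ≤ totalDominationNumber G := by
  classical
  by_cases h : ∃ D, IsTotalDominatingSet G D
  · obtain ⟨D, hD, hcard⟩ := exists_isTotalDominatingSet_card_eq h
    calc totalDominationNumber (doubleGraph G) ≤ (D.image (·, (0 : Fin 2))).card :=
          totalDominationNumber_le_card (hD.image_doubleGraph 0)
      _ = D.card := Finset.card_image_of_injective _ fun _ _ huv => congrArg Prod.fst huv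
      _ = totalDominationNumber G := hcard
  · have hdouble : ∀ D, ¬IsTotalDominatingSet (doubleGraph G) D :=
      fun _ hD => h ⟨_, hD.of_doubleGraph⟩
    rw [totalDominationNumber_eq_zero hdouble]
    exact Nat.zero_le _

/-- If `G` is a connected graph with at least two vertices, then
`γₜ(G*) ≤ γₜ(G)`. -/
theorem stmt_14 {V : Type*} [Fintype V] (G : SimpleGraph V)
    (hconn : G.Connected) (hn : 2 ≤ Fintype.card V) :
    totalDominationNumber (doubleGraph G) ≤ totalDominationNumber G :=
  stmt_14_general G
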